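/- arXiv:1105.4673 — 2 statements merged into one kernel-verified Lean document; each statement's English description precedes it below -/
import Mathlib

section
/- (Lie–Trotter product formula, finite dimensions) For linear operators A and B on a finite-dimensional vector space and any t, the product (e^{(t/n)A} e^{(t/n)B})^n converges to e^{t(A+B)} as n → ∞. -/
open NormedSpace Filter Topology Asymptotics

/-!
Put `s = t / n`, `u = e^{sA} e^{sB}` and `v = e^{s(A+B)}`, so that `v ^ n = e^{t(A+B)}`.
The curves `s ↦ e^{sA} e^{sB}` and `s ↦ e^{s(A+B)}` have the same derivative `A + B` at `0`,
so `n ‖u - v‖ → 0`. As `‖u‖, ‖v‖ ≤ e^{c/n}` with `c = |t| (‖A‖ + ‖B‖)`, telescoping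
`u^n - v^n = u (u^{n-1} - v^{n-1}) + (u - v) v^{n-1}` gives `‖u^n - v^n‖ ≤ e^c · n ‖u - v‖ → 0`.
-/

namespace NormedSpace

section RealAlgebra

variable {𝔸 : Type*} [NormedRing 𝔸] [NormOneClass 𝔸] [NormedAlgebra ℝ 𝔸]

theorem norm_exp_le_exp_norm (x : 𝔸) : ‖exp x‖ ≤ Real.exp ‖x‖ := by
  have hsum := Real.summable_pow_div_factorial ‖x‖
  rw [exp_eq_tsum ℝ, Real.exp_eq_exp_ℝ, exp_eq_tsum_div]
  refine (norm_tsum_le_tsum_norm (norm_expSeries_summable' x)).trans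
    (Summable.tsum_le_tsum (fun n => ?_) (norm_expSeries_summable' x) hsum)
  rw [norm_smul, norm_inv, RCLike.norm_natCast, inv_mul_eq_div]
  gcongr
  exact norm_pow_le x n

theorem norm_exp_smul_le (s : ℝ) (a : 𝔸) : ‖exp (s • a)‖ ≤ Real.exp (|s| * ‖a‖) := by
  simpa only [norm_smul, Real.norm_eq_abs] using norm_exp_le_exp_norm (s • a)

theorem norm_exp_smul_mul_exp_smul_le (s : ℝ) (a b : 𝔸) :
    ‖exp (s • a) * exp (s • b)‖ ≤ Real.exp (|s| * (‖a‖ + ‖b‖)) :=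
  calc ‖exp (s • a) * exp (s • b)‖ ≤ ‖exp (s • a)‖ * ‖exp (s • b)‖ := norm_mul_le _ _
    _ ≤ Real.exp (|s| * ‖a‖) * Real.exp (|s| * ‖b‖) := by
        gcongr
        exacts [norm_exp_smul_le s a, norm_exp_smul_le s b]
    _ = Real.exp (|s| * (‖a‖ + ‖b‖)) := by rw [← Real.exp_add, mul_add]

theorem norm_exp_smul_add_le (s : ℝ) (a b : 𝔸) :
    ‖exp (s • (a + b))‖ ≤ Real.exp (|s| * (‖a‖ + ‖b‖)) :=
  (norm_exp_smul_le s (a + b)).trans (by gcongr; exact norm_add_le a b)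

end RealAlgebra

section RCLikeAlgebra

variable {𝕂 𝔸 : Type*} [RCLike 𝕂] [NormedRing 𝔸] [NormedAlgebra 𝕂 𝔸] [CompleteSpace 𝔸]

theorem exp_div_smul_pow (x : 𝔸) (t : 𝕂) {n : ℕ} (hn : n ≠ 0) :
    exp ((t / n) • x) ^ n = exp (t • x) := by
  let := NormedAlgebra.restrictScalars ℚ 𝕂 𝔸
  rw [← exp_nsmul, ← Nat.cast_smul_eq_nsmul 𝕂, smul_smul, mul_div_cancel₀ _ (by exact_mod_cast hn)]

theorem isLittleO_exp_smul_mul_exp_smul_sub_exp_smul_add (a b : 𝔸) :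
    (fun s : 𝕂 => exp (s • a) * exp (s • b) - exp (s • (a + b))) =o[𝓝 0] fun s => s := by
  have hderiv : HasDerivAt (fun s : 𝕂 => exp (s • a) * exp (s • b) - exp (s • (a + b))) 0 0 := by
    refine (((hasDerivAt_exp_smul_const a (0 : 𝕂)).mul (hasDerivAt_exp_smul_const' b 0)).sub
      (hasDerivAt_exp_smul_const (a + b) 0)).congr_deriv ?_
    simp only [zero_smul, exp_zero, one_mul, mul_one]
    abel
  simpa only [zero_smul, exp_zero, mul_one, sub_self, sub_zero, smul_zero]
    using hasDerivAt_iff_isLittleO.1 hderiv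

end RCLikeAlgebra

end NormedSpace

theorem norm_pow_sub_pow_le {R : Type*} [SeminormedRing R] [NormOneClass R] {u v : R} {M : ℝ}
    (hu : ‖u‖ ≤ M) (hv : ‖v‖ ≤ M) (n : ℕ) : ‖u ^ n - v ^ n‖ ≤ n * M ^ (n - 1) * ‖u - v‖ := by
  have hM : 0 ≤ M := (norm_nonneg u).trans hu
  induction n with
  | zero => simp
  | succ n ih =>
    have hpow : n * (M * M ^ (n - 1)) = n * M ^ n := by
      rcases n with _ | n
      · simp
      · rw [mul_pow_sub_one n.succ_ne_zero]
    calc ‖u ^ (n + 1) - v ^ (n + 1)‖ = ‖u * (u ^ n - v ^ n) + (u - v) * v ^ n‖ := by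
          rw [pow_succ' u, pow_succ' v]; noncomm_ring
      _ ≤ ‖u‖ * ‖u ^ n - v ^ n‖ + ‖u - v‖ * ‖v‖ ^ n :=
          (norm_add_le _ _).trans (add_le_add (norm_mul_le _ _)
            ((norm_mul_le _ _).trans (by gcongr; exact norm_pow_le v n)))
      _ ≤ M * (n * M ^ (n - 1) * ‖u - v‖) + ‖u - v‖ * M ^ n := by gcongr
      _ = (n + 1 : ℕ) * M ^ (n + 1 - 1) * ‖u - v‖ := by
          rw [Nat.add_sub_cancel]; push_cast; linear_combination ‖u - v‖ * hpow

theorem tendsto_pow_sub_pow_of_norm_le_exp {R : Type*} [SeminormedRing R] [NormOneClass R]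
    {u v : ℕ → R} {c : ℝ} (hc : 0 ≤ c) (hu : ∀ n, ‖u n‖ ≤ Real.exp (c / n))
    (hv : ∀ n, ‖v n‖ ≤ Real.exp (c / n)) (huv : Tendsto (fun n => n * ‖u n - v n‖) atTop (𝓝 0)) :
    Tendsto (fun n => u n ^ n - v n ^ n) atTop (𝓝 0) := by
  have hexp : ∀ n : ℕ, Real.exp (c / n) ^ (n - 1) ≤ Real.exp c := fun n => by
    rw [← Real.exp_nat_mul, Real.exp_le_exp]
    rcases Nat.eq_zero_or_pos n with rfl | hn
    · simpa using hc
    · calc ((n - 1 : ℕ) : ℝ) * (c / n) ≤ n * (c / n) := by gcongr; exact_mod_cast Nat.sub_le n 1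
        _ = c := mul_div_cancel₀ c (by positivity)
  refine squeeze_zero_norm (fun n => ?_) (by simpa using huv.const_mul (Real.exp c))
  calc ‖u n ^ n - v n ^ n‖ ≤ n * Real.exp (c / n) ^ (n - 1) * ‖u n - v n‖ :=
        norm_pow_sub_pow_le (hu n) (hv n) n
    _ ≤ Real.exp c * (n * ‖u n - v n‖) := by
        rw [mul_left_comm, mul_assoc]; gcongr; exact hexp n

theorem Asymptotics.IsLittleO.tendsto_natCast_mul_norm_comp_div {F : Type*} [NormedAddCommGroup F]
    {f : ℝ → F} (hf : f =o[𝓝 0] fun s => s) (t : ℝ) :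
    Tendsto (fun n : ℕ => n * ‖f (t / n)‖) atTop (𝓝 0) := by
  have hcomp := (hf.comp_tendsto (tendsto_const_div_atTop_nhds_zero_nat t)).norm_left
  have hbound : (fun n : ℕ => (n : ℝ) * (t / n)) =O[atTop] fun _ => (1 : ℝ) :=
    (isBigO_const_const t one_ne_zero atTop).congr'
      ((eventually_ne_atTop 0).mono fun n hn => (mul_div_cancel₀ t (by exact_mod_cast hn)).symm)
      EventuallyEq.rfl
  exact (isLittleO_one_iff ℝ).1 (((isBigO_refl _ _).mul_isLittleO hcomp).trans_isBigO hbound)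

/-- Lie–Trotter product formula in finite dimensions:
`(e^{(t/n)A} e^{(t/n)B})^n → e^{t(A+B)}` as `n → ∞`. -/
theorem lie_trotter_product_formula {E : Type*} [NormedAddCommGroup E] [NormedSpace ℝ E]
    [FiniteDimensional ℝ E] (A B : E →L[ℝ] E) (t : ℝ) :
    Tendsto (fun n : ℕ => (exp ((t / n) • A) * exp ((t / n) • B)) ^ n)
      atTop (𝓝 (exp (t • (A + B)))) := by
  -- `NormOneClass (E →L[ℝ] E)` needs `Nontrivial E`: on the zero space `‖1‖ = 0`.
  rcases subsingleton_or_nontrivial E with hE | hE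
  · exact tendsto_const_nhds.congr fun n => Subsingleton.elim _ _
  set c := |t| * (‖A‖ + ‖B‖)
  have hscale : ∀ n : ℕ, |t / n| * (‖A‖ + ‖B‖) = c / n := fun n => by
    rw [abs_div, Nat.abs_cast, div_mul_eq_mul_div]
  have hdiff := tendsto_pow_sub_pow_of_norm_le_exp (by positivity : 0 ≤ c)
    (fun n => hscale n ▸ norm_exp_smul_mul_exp_smul_le _ A B)
    (fun n => hscale n ▸ norm_exp_smul_add_le _ A B)
    ((isLittleO_exp_smul_mul_exp_smul_sub_exp_smul_add A B).tendsto_natCast_mul_norm_comp_div t)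
  refine tendsto_sub_nhds_zero_iff.1 (hdiff.congr' ?_)
  filter_upwards [eventually_ne_atTop 0] with n hn
  rw [exp_div_smul_pow _ _ hn]
end

section
/- Let ξ be a random variable taking values 1 and 2 each with probability 1/2, and let ξ₁, ξ₂ be i.i.d. copies. Let A₁, A₂ be linear operators on a finite-dimensional vector space. Then the expectation over (ξ₁, ξ₂) of e^{Δt A_{ξ₁}} e^{Δt A_{ξ₂}} - e^{Δt(A₁+A₂)} equals (1/4)(A₁ - A₂)² Δt² + O(Δt³) as Δt → 0. -/
open NormedSpace Filter Asymptotics Set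
open scoped Nat

/-!
Since `ξ₁, ξ₂` are independent, the mean of the products is the square of the mean
`m t = (exp (t A₁) + exp (t A₂)) / 2`. With the cubic Taylor remainder of `exp` bounded uniformly
for `|t| ≤ 1`, `m t = 1 + t s + t² q + O(t³)` where `s = (A₁ + A₂) / 2` and `q = (A₁² + A₂²) / 4`,
so `m t ^ 2 = 1 + t (A₁ + A₂) + t² (s² + 2 q) + O(t³)`, whereas
`exp (t (A₁ + A₂)) = 1 + t (A₁ + A₂) + t² (A₁ + A₂)² / 2 + O(t³)`.
The `t²` coefficients differ by `s² + 2 q - (A₁ + A₂)² / 2 = (A₁ - A₂)² / 4`.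
-/

theorem Asymptotics.IsBigO.mul_sub_mul {α R : Type*} [SeminormedRing R] {l : Filter α}
    {f₁ f₂ g₁ g₂ : α → R} {k : α → ℝ}
    (h₁ : (fun x => f₁ x - g₁ x) =O[l] k) (h₂ : (fun x => f₂ x - g₂ x) =O[l] k)
    (hf₂ : f₂ =O[l] fun _ => (1 : ℝ)) (hg₁ : g₁ =O[l] fun _ => (1 : ℝ)) :
    (fun x => f₁ x * f₂ x - g₁ x * g₂ x) =O[l] k := by
  have h := ((h₁.mul hf₂).congr_right fun x => mul_one (k x)).add
    ((hg₁.mul h₂).congr_right fun x => one_mul (k x))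
  exact h.congr_left fun x => by noncomm_ring

theorem Continuous.isBigO_one_Icc {E : Type*} [SeminormedAddGroup E] {f : ℝ → E}
    (hf : Continuous f) (r : ℝ) : f =O[𝓟 (Icc (-r) r)] fun _ => (1 : ℝ) :=
  hf.continuousOn.isBigO_principal isCompact_Icc (by norm_num)

section

variable {𝔸 : Type*} [NormedRing 𝔸] [NormedAlgebra ℝ 𝔸] [CompleteSpace 𝔸]

theorem norm_exp_sub_quadratic_le (x : 𝔸) :
    ‖exp x - (1 + x + (2⁻¹ : ℝ) • x ^ 2)‖ ≤ ‖x‖ ^ 3 * Real.exp ‖x‖ := by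
  have htail := (hasSum_nat_add_iff' 3).mpr (exp_series_hasSum_exp' (𝕂 := ℝ) x)
  have hbound := (Real.exp_eq_exp_ℝ ▸ exp_series_hasSum_exp' (𝕂 := ℝ) ‖x‖).mul_left (‖x‖ ^ 3)
  simp only [Finset.sum_range_succ, Finset.sum_range_zero, Nat.factorial, Nat.succ_eq_add_one,
    Nat.cast_one, Nat.cast_ofNat, Nat.reduceAdd, Nat.reduceMul, inv_one, one_smul, pow_zero,
    pow_one, zero_add] at htail
  refine htail.norm_le_of_bounded hbound fun n => ?_
  calc ‖((n + 3)! : ℝ)⁻¹ • x ^ (n + 3)‖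
      ≤ (n ! : ℝ)⁻¹ * (‖x‖ ^ 3 * ‖x‖ ^ n) := by
        rw [norm_smul, norm_inv, RCLike.norm_natCast, ← pow_add, add_comm 3 n]
        gcongr
        · omega
        · exact norm_pow_le' x (by omega)
    _ = _ := by rw [smul_eq_mul]; ring

theorem exp_smul_sub_quadratic_isBigO (x : 𝔸) (r : ℝ) :
    (fun t : ℝ => exp (t • x) - (1 + t • x + (t ^ 2 / 2) • x ^ 2))
      =O[𝓟 (Icc (-r) r)] fun t => t ^ 3 := by
  refine isBigO_principal.2 ⟨‖x‖ ^ 3 * Real.exp (r * ‖x‖), fun t ht => ?_⟩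
  have htr : |t| ≤ r := abs_le.2 ht
  have htaylor : t • x + (2⁻¹ : ℝ) • (t • x) ^ 2 = t • x + (t ^ 2 / 2) • x ^ 2 := by
    rw [smul_pow, smul_smul, inv_mul_eq_div]
  calc ‖exp (t • x) - (1 + t • x + (t ^ 2 / 2) • x ^ 2)‖
      ≤ (|t| * ‖x‖) ^ 3 * Real.exp (|t| * ‖x‖) := by
        simpa only [add_assoc, htaylor, norm_smul, Real.norm_eq_abs]
          using norm_exp_sub_quadratic_le (t • x)
    _ ≤ (|t| * ‖x‖) ^ 3 * Real.exp (r * ‖x‖) := by gcongr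
    _ = ‖x‖ ^ 3 * Real.exp (r * ‖x‖) * ‖t ^ 3‖ := by
        rw [norm_pow, Real.norm_eq_abs]; ring

theorem sq_mean_exp_smul_sub_exp_smul_add_isBigO (a b : 𝔸) (r : ℝ) :
    (fun t : ℝ => ((2⁻¹ : ℝ) • (exp (t • a) + exp (t • b))) ^ 2 - exp (t • (a + b))
        - (t ^ 2 / 4) • (a - b) ^ 2) =O[𝓟 (Icc (-r) r)] fun t => t ^ 3 := by
  set s : 𝔸 := (2⁻¹ : ℝ) • (a + b)
  set q : 𝔸 := (4⁻¹ : ℝ) • (a ^ 2 + b ^ 2)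
  have hmean : (fun t : ℝ => (2⁻¹ : ℝ) • (exp (t • a) + exp (t • b)) - (1 + t • s + t ^ 2 • q))
      =O[𝓟 (Icc (-r) r)] fun t => t ^ 3 :=
    (((exp_smul_sub_quadratic_isBigO a r).add (exp_smul_sub_quadratic_isBigO b r)).const_smul_left
      (2⁻¹ : ℝ)).congr_left fun t => by simp only [Pi.smul_apply, s, q]; module
  have hexp : Continuous (exp : 𝔸 → 𝔸) :=
    continuous_iff_continuousAt.2 fun x => (exp_analytic (𝕂 := ℝ) x).continuousAt
  have hsq := hmean.mul_sub_mul hmean (Continuous.isBigO_one_Icc (by fun_prop) r)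
    (Continuous.isBigO_one_Icc (by fun_prop) r)
  have hpoly (t : ℝ) : (1 + t • s + t ^ 2 • q) * (1 + t • s + t ^ 2 • q)
      - (1 + t • (a + b) + (t ^ 2 / 2) • (a + b) ^ 2) - (t ^ 2 / 4) • (a - b) ^ 2
      = t ^ 3 • (s * q + q * s + t • (q * q)) := by
    simp only [s, q, sq, add_mul, mul_add, sub_mul, mul_sub, smul_mul_assoc, mul_smul_comm,
      one_mul, mul_one, smul_add, smul_sub, smul_smul]
    module
  have hpoly_isBigO : (fun t : ℝ => t ^ 3 • (s * q + q * s + t • (q * q)))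
      =O[𝓟 (Icc (-r) r)] fun t => t ^ 3 :=
    ((isBigO_refl _ _).smul (Continuous.isBigO_one_Icc (by fun_prop) r)).congr_right fun t => by
      rw [smul_eq_mul, mul_one]
  refine ((hsq.sub (exp_smul_sub_quadratic_isBigO (a + b) r)).add hpoly_isBigO).congr_left
    fun t => ?_
  rw [← hpoly, sq ((2⁻¹ : ℝ) • _)]
  abel

end

/-- Mean local error of the random sub-lattice schedule: with `ξ₁, ξ₂` i.i.d. uniform in `{1,2}`,
`E[e^{ΔtA_{ξ₁}} e^{ΔtA_{ξ₂}}] - e^{Δt(A₁+A₂)} = (1/4)(A₁-A₂)² Δt² + O(Δt³)`. -/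
theorem random_schedule_mean_local_error {E : Type*} [NormedAddCommGroup E] [NormedSpace ℝ E]
    [FiniteDimensional ℝ E] (A : Fin 2 → (E →L[ℝ] E)) :
    ∃ C > 0, ∀ Δt : ℝ, Δt ∈ Set.Ioc (0 : ℝ) 1 →
      ‖(1 / 4 : ℝ) • (∑ ξ₁ : Fin 2, ∑ ξ₂ : Fin 2, exp (Δt • A ξ₁) * exp (Δt • A ξ₂))
          - exp (Δt • (A 0 + A 1))
          - ((Δt ^ 2) / 4) • ((A 0 - A 1) * (A 0 - A 1))‖ ≤ C * Δt ^ 3 := by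
  obtain ⟨C, hC, hbound⟩ :=
    (sq_mean_exp_smul_sub_exp_smul_add_isBigO (A 0) (A 1) 1).exists_pos
  refine ⟨C, hC, fun t ⟨ht₀, ht₁⟩ => ?_⟩
  have hmean_sq : (1 / 4 : ℝ) • (∑ ξ₁ : Fin 2, ∑ ξ₂ : Fin 2, exp (t • A ξ₁) * exp (t • A ξ₂))
      = ((2⁻¹ : ℝ) • (exp (t • A 0) + exp (t • A 1))) ^ 2 := by
    simp only [Fin.sum_univ_two, sq, add_mul, mul_add, smul_mul_smul_comm]
    module
  have hle := isBigOWith_principal.1 hbound t ⟨by linarith, ht₁⟩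
  rwa [← hmean_sq, sq (A 0 - A 1), norm_pow, Real.norm_of_nonneg ht₀.le] at hle
end
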